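/- Let ψ₁, ψ₂ : ℂ → ℂ be smooth solutions of the Dirac system ∂ψ₁ = pψ₂, ∂̄ψ₂ = −pψ₁ with smooth real potential p, and suppose q = |ψ₁|² + |ψ₂|² ≠ 0 on an open set. Then on that set the Gauss equation ∂∂̄(ln q²) = (1/2)·QQ̄/q² − 2H²q² holds, where Q = 2(ψ₂∂ψ̄₁ − ψ̄₁∂ψ₂) and H = p/q. -/

import Mathlib

open Complex ComplexConjugate

/-- Wirtinger derivative ∂ = (∂ₓ - i∂_y)/2. -/
noncomputable def wd (f : ℂ → ℂ) (z : ℂ) : ℂ :=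
  (fderiv ℝ f z 1 - Complex.I * fderiv ℝ f z Complex.I) / 2

/-- Wirtinger derivative ∂̄ = (∂ₓ + i∂_y)/2. -/
noncomputable def wdb (f : ℂ → ℂ) (z : ℂ) : ℂ :=
  (fderiv ℝ f z 1 + Complex.I * fderiv ℝ f z Complex.I) / 2

lemma wd_congr {f g : ℂ → ℂ} {z : ℂ} (h : f =ᶠ[nhds z] g) : wd f z = wd g z := by
  unfold wd; rw [h.fderiv_eq]

lemma wd_add {f g : ℂ → ℂ} {z : ℂ} (hf : DifferentiableAt ℝ f z)
    (hg : DifferentiableAt ℝ g z) :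
    wd (fun w => f w + g w) z = wd f z + wd g z := by
  unfold wd; rw [fderiv_fun_add hf hg]; simp; ring

lemma wdb_add {f g : ℂ → ℂ} {z : ℂ} (hf : DifferentiableAt ℝ f z)
    (hg : DifferentiableAt ℝ g z) :
    wdb (fun w => f w + g w) z = wdb f z + wdb g z := by
  unfold wdb; rw [fderiv_fun_add hf hg]; simp; ring

lemma wd_mul {f g : ℂ → ℂ} {z : ℂ} (hf : DifferentiableAt ℝ f z)
    (hg : DifferentiableAt ℝ g z) :
    wd (fun w => f w * g w) z = wd f z * g z + f z * wd g z := by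
  unfold wd; rw [fderiv_fun_mul hf hg]
  simp [ContinuousLinearMap.add_apply, ContinuousLinearMap.smul_apply, smul_eq_mul]; ring

lemma wdb_mul {f g : ℂ → ℂ} {z : ℂ} (hf : DifferentiableAt ℝ f z)
    (hg : DifferentiableAt ℝ g z) :
    wdb (fun w => f w * g w) z = wdb f z * g z + f z * wdb g z := by
  unfold wdb; rw [fderiv_fun_mul hf hg]
  simp [ContinuousLinearMap.add_apply, ContinuousLinearMap.smul_apply, smul_eq_mul]; ring

lemma wd_const_mul {f : ℂ → ℂ} {z : ℂ} (c : ℂ) (hf : DifferentiableAt ℝ f z) :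
    wd (fun w => c * f w) z = c * wd f z := by
  unfold wd; rw [fderiv_const_mul hf c]
  simp [ContinuousLinearMap.smul_apply, smul_eq_mul]; ring

lemma wd_conj {f : ℂ → ℂ} (z : ℂ) :
    wd (fun w => conj (f w)) z = conj (wdb f z) := by
  unfold wd wdb
  have : (fun w => conj (f w)) = (⇑Complex.conjCLE ∘ f) := rfl
  rw [this, Complex.conjCLE.comp_fderiv]
  simp [Complex.conjCLE_apply, map_add, map_mul, map_div₀, map_ofNat]
  ring

lemma wdb_conj {f : ℂ → ℂ} (z : ℂ) :
    wdb (fun w => conj (f w)) z = conj (wd f z) := by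
  unfold wd wdb
  have : (fun w => conj (f w)) = (⇑Complex.conjCLE ∘ f) := rfl
  rw [this, Complex.conjCLE.comp_fderiv]
  simp [Complex.conjCLE_apply, map_add, map_mul, map_div₀, map_ofNat]

lemma contDiff_fderiv {f : ℂ → ℂ} (hf : ContDiff ℝ (⊤ : ℕ∞) f) (v : ℂ) :
    ContDiff ℝ (⊤ : ℕ∞) (fun w => fderiv ℝ f w v) :=
  (hf.fderiv_right (by simp)).clm_apply contDiff_const

lemma contDiff_wd {f : ℂ → ℂ} (hf : ContDiff ℝ (⊤ : ℕ∞) f) : ContDiff ℝ (⊤ : ℕ∞) (wd f) := by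
  unfold wd
  exact ((contDiff_fderiv hf 1).sub (contDiff_const.mul (contDiff_fderiv hf I))).div_const 2

lemma contDiff_wdb {f : ℂ → ℂ} (hf : ContDiff ℝ (⊤ : ℕ∞) f) : ContDiff ℝ (⊤ : ℕ∞) (wdb f) := by
  unfold wdb
  exact ((contDiff_fderiv hf 1).add (contDiff_const.mul (contDiff_fderiv hf I))).div_const 2

lemma fderiv_fderiv_apply {f : ℂ → ℂ} (hf : ContDiff ℝ (⊤ : ℕ∞) f) (z u v : ℂ) :
    fderiv ℝ (fun w => fderiv ℝ f w v) z u = fderiv ℝ (fderiv ℝ f) z u v := by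
  rw [fderiv_clm_apply ((hf.fderiv_right (m := 1) (WithTop.coe_le_coe.mpr le_top)).differentiable one_ne_zero z)
    (differentiableAt_const v)]
  simp

lemma second_symm {f : ℂ → ℂ} (hf : ContDiff ℝ (⊤ : ℕ∞) f) (z u v : ℂ) :
    fderiv ℝ (fderiv ℝ f) z u v = fderiv ℝ (fderiv ℝ f) z v u :=
  second_derivative_symmetric (fun y => ((hf.differentiable (by simp)) y).hasFDerivAt)
    (((hf.fderiv_right (m := 1) (WithTop.coe_le_coe.mpr le_top)).differentiable one_ne_zero z).hasFDerivAt) u v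

lemma fderiv_combo {g1 g2 : ℂ → ℂ} {z : ℂ} (c : ℂ) (h1 : DifferentiableAt ℝ g1 z)
    (h2 : DifferentiableAt ℝ g2 z) (u : ℂ) :
    fderiv ℝ (fun w => (g1 w + c * g2 w)/2) z u
      = (fderiv ℝ g1 z u + c * fderiv ℝ g2 z u)/2 := by
  have e : (fun w => (g1 w + c * g2 w)/2) = fun w => (2:ℂ)⁻¹ * (g1 w + c * g2 w) := by
    funext w; ring
  rw [e, HasFDerivAt.fderiv (f := fun w => (2:ℂ)⁻¹ * (g1 w + c * g2 w)) ((h1.hasFDerivAt.add ((h2.hasFDerivAt).const_mul c)).const_mul ((2:ℂ)⁻¹))]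
  simp [ContinuousLinearMap.add_apply, ContinuousLinearMap.smul_apply, smul_eq_mul]
  ring

lemma wd_wdb_comm {f : ℂ → ℂ} (hf : ContDiff ℝ (⊤ : ℕ∞) f) (z : ℂ) :
    wd (wdb f) z = wdb (wd f) z := by
  have hd : ∀ v, DifferentiableAt ℝ (fun w => fderiv ℝ f w v) z :=
    fun v => (contDiff_fderiv hf v).differentiable (by simp) z
  have e1 : wdb f = fun w => (fderiv ℝ f w 1 + I * fderiv ℝ f w I)/2 := rfl
  have e2 : wd f = fun w => (fderiv ℝ f w 1 + (-I) * fderiv ℝ f w I)/2 := by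
    funext w; unfold wd; ring
  have k1 : ∀ u, fderiv ℝ (wdb f) z u
      = (fderiv ℝ (fderiv ℝ f) z u 1 + I * fderiv ℝ (fderiv ℝ f) z u I)/2 := by
    intro u
    rw [e1, fderiv_combo I (hd 1) (hd I) u, fderiv_fderiv_apply hf, fderiv_fderiv_apply hf]
  have k2 : ∀ u, fderiv ℝ (wd f) z u
      = (fderiv ℝ (fderiv ℝ f) z u 1 + (-I) * fderiv ℝ (fderiv ℝ f) z u I)/2 := by
    intro u
    rw [e2, fderiv_combo (-I) (hd 1) (hd I) u, fderiv_fderiv_apply hf, fderiv_fderiv_apply hf]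
  rw [show wd (wdb f) z = (fderiv ℝ (wdb f) z 1 - I * fderiv ℝ (wdb f) z Complex.I)/2 from rfl,
    show wdb (wd f) z = (fderiv ℝ (wd f) z 1 + I * fderiv ℝ (wd f) z Complex.I)/2 from rfl,
    k1 1, k1 I, k2 1, k2 I, second_symm hf z I 1]
  ring

lemma wd_real_conj {f : ℂ → ℂ} (hreal : ∀ w, conj (f w) = f w) (z : ℂ) :
    wd f z = conj (wdb f z) := by
  have h : f = fun w => conj (f w) := by funext w; rw [hreal]
  conv_lhs => rw [h]
  exact wd_conj z

lemma fderiv_ofReal_comp {g : ℂ → ℝ} {z : ℂ} (hg : DifferentiableAt ℝ g z) (v : ℂ) :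
    fderiv ℝ (fun w => (g w : ℂ)) z v = (fderiv ℝ g z v : ℂ) := by
  have h := (Complex.ofRealCLM.hasFDerivAt.comp z hg.hasFDerivAt).fderiv
  rw [show (fun w => (g w : ℂ)) = (⇑Complex.ofRealCLM ∘ g) from rfl, h]; simp

lemma hasFDeriv_log_sq {g : ℂ → ℝ} {w : ℂ} (hg : DifferentiableAt ℝ g w) (h0 : g w ≠ 0) :
    HasFDerivAt (fun u => Real.log (g u ^ 2)) ((2 / g w) • fderiv ℝ g w) w := by
  have h1 : HasFDerivAt (fun u => g u ^ 2) ((2 * g w) • fderiv ℝ g w) w := by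
    have hm := hg.hasFDerivAt.mul hg.hasFDerivAt
    have e : (fun u => g u ^ 2) = fun u => g u * g u := by funext u; ring
    rw [e]
    have e' : (2 * g w) • fderiv ℝ g w = g w • fderiv ℝ g w + g w • fderiv ℝ g w := by
      rw [two_mul, add_smul]
    rw [e']; exact hm
  have h2 : HasDerivAt Real.log (g w ^ 2)⁻¹ (g w ^ 2) := Real.hasDerivAt_log (pow_ne_zero 2 h0)
  have h3 := h2.comp_hasFDerivAt w h1
  have e2 : (2 / g w) • fderiv ℝ g w = (g w ^ 2)⁻¹ • (2 * g w) • fderiv ℝ g w := by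
    rw [smul_smul]
    congr 1
    field_simp
  rw [e2]; exact h3

lemma wdb_log {g : ℂ → ℝ} (hg : ContDiff ℝ (⊤ : ℕ∞) g) {w : ℂ} (h0 : g w ≠ 0) :
    wdb (fun u => (Real.log (g u ^ 2) : ℂ)) w
      = 2 * wdb (fun u => (g u : ℂ)) w / (g w : ℂ) := by
  have hd : DifferentiableAt ℝ g w := hg.differentiable (by simp) w
  have h3 := hasFDeriv_log_sq hd h0
  have hv : ∀ v : ℂ, fderiv ℝ (fun u => Real.log (g u ^ 2)) w v
      = 2 * fderiv ℝ g w v / g w := by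
    intro v
    rw [h3.fderiv]
    simp [smul_eq_mul]
    ring
  unfold wdb
  rw [fderiv_ofReal_comp h3.differentiableAt 1, fderiv_ofReal_comp h3.differentiableAt Complex.I,
    fderiv_ofReal_comp hd 1, fderiv_ofReal_comp hd Complex.I, hv 1, hv Complex.I]
  have hc : (g w : ℂ) ≠ 0 := Complex.ofReal_ne_zero.mpr h0
  push_cast
  field_simp

lemma contDiff_conj {f : ℂ → ℂ} (hf : ContDiff ℝ (⊤ : ℕ∞) f) :
    ContDiff ℝ (⊤ : ℕ∞) (fun w => conj (f w)) :=
  Complex.conjCLE.toContinuousLinearMap.contDiff.comp hf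

lemma contDiff_ofReal {g : ℂ → ℝ} (hg : ContDiff ℝ (⊤ : ℕ∞) g) :
    ContDiff ℝ (⊤ : ℕ∞) (fun w => (g w : ℂ)) :=
  Complex.ofRealCLM.contDiff.comp hg

theorem stmt_7 (ψ₁ ψ₂ : ℂ → ℂ) (p : ℂ → ℝ)
    (hψ₁ : ContDiff ℝ (⊤ : ℕ∞) ψ₁) (hψ₂ : ContDiff ℝ (⊤ : ℕ∞) ψ₂) (hp : ContDiff ℝ (⊤ : ℕ∞) p)
    (hD₁ : ∀ z, wd ψ₁ z = (p z : ℂ) * ψ₂ z)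
    (hD₂ : ∀ z, wdb ψ₂ z = -(p z : ℂ) * ψ₁ z)
    (U : Set ℂ) (hU : IsOpen U)
    (q : ℂ → ℝ) (hq : ∀ z, q z = ‖ψ₁ z‖ ^ 2 + ‖ψ₂ z‖ ^ 2)
    (hqpos : ∀ z ∈ U, q z ≠ 0)
    (H : ℂ → ℝ) (hH : ∀ z, H z = p z / q z)
    (Q : ℂ → ℂ)
    (hQdef : ∀ z, Q z = 2 * (ψ₂ z * wd (fun w => conj (ψ₁ w)) z -
      conj (ψ₁ z) * wd ψ₂ z)) :
    ∀ z ∈ U,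
      wd (fun w => wdb (fun u => (Real.log ((q u) ^ 2) : ℂ)) w) z =
        (1 / 2) * (Q z * conj (Q z)) / ((q z : ℂ)) ^ 2 -
          2 * ((H z : ℂ)) ^ 2 * ((q z : ℂ)) ^ 2 := by
  intro z hz
  -- basic differentiability facts
  have dψ₁ : ∀ w, DifferentiableAt ℝ ψ₁ w := fun w => hψ₁.differentiable (by simp) w
  have dψ₂ : ∀ w, DifferentiableAt ℝ ψ₂ w := fun w => hψ₂.differentiable (by simp) w
  have hcψ₁ : ContDiff ℝ (⊤ : ℕ∞) (fun w => conj (ψ₁ w)) := contDiff_conj hψ₁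
  have hcψ₂ : ContDiff ℝ (⊤ : ℕ∞) (fun w => conj (ψ₂ w)) := contDiff_conj hψ₂
  have hpC : ContDiff ℝ (⊤ : ℕ∞) (fun w => ((p w : ℝ) : ℂ)) := contDiff_ofReal hp
  have hA : ContDiff ℝ (⊤ : ℕ∞) (wdb ψ₁) := contDiff_wdb hψ₁
  have hB : ContDiff ℝ (⊤ : ℕ∞) (wd ψ₂) := contDiff_wd hψ₂
  -- complexified q
  set qC : ℂ → ℂ := fun w => ψ₁ w * conj (ψ₁ w) + ψ₂ w * conj (ψ₂ w) with hqCdef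
  have hqC : ∀ w, (q w : ℂ) = qC w := by
    intro w
    rw [hq w]
    push_cast
    rw [hqCdef]
    simp only [Complex.mul_conj, ← Complex.sq_norm]
    push_cast
    ring
  have hqCs : ContDiff ℝ (⊤ : ℕ∞) qC := (hψ₁.mul hcψ₁).add (hψ₂.mul hcψ₂)
  have hqs : ContDiff ℝ (⊤ : ℕ∞) q := by
    have e : q = fun w => (qC w).re := by
      funext w; rw [← hqC w]; simp
    rw [e]
    exact Complex.reCLM.contDiff.comp hqCs
  -- function-level Dirac equations
  have hwdψ₁ : wd ψ₁ = fun w => ((p w : ℝ) : ℂ) * ψ₂ w := funext hD₁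
  have hwdbψ₂ : wdb ψ₂ = fun w => -((p w : ℝ) : ℂ) * ψ₁ w := funext hD₂
  -- the function G = ∂̄ qC
  set G : ℂ → ℂ := fun w => conj (ψ₁ w) * wdb ψ₁ w + ψ₂ w * conj (wd ψ₂ w) with hGdef
  have hGs : ContDiff ℝ (⊤ : ℕ∞) G := (hcψ₁.mul hA).add (hψ₂.mul (contDiff_conj hB))
  have hG : ∀ w, wdb qC w = G w := by
    intro w
    rw [hqCdef]
    rw [wdb_add (f := fun w => ψ₁ w * conj (ψ₁ w)) (g := fun w => ψ₂ w * conj (ψ₂ w)) ((dψ₁ w).mul (hcψ₁.differentiable (by simp) w))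
        ((dψ₂ w).mul (hcψ₂.differentiable (by simp) w)),
      wdb_mul (dψ₁ w) (hcψ₁.differentiable (by simp) w),
      wdb_mul (dψ₂ w) (hcψ₂.differentiable (by simp) w),
      wdb_conj, wdb_conj, hD₁ w, hD₂ w]
    rw [hGdef]
    simp only [map_mul, Complex.conj_ofReal]
    ring
  have hqCreal : ∀ w, conj (qC w) = qC w := by
    intro w; rw [← hqC w]; exact Complex.conj_ofReal _
  have hwdqC : ∀ w, wd qC w = conj (G w) := by
    intro w; rw [wd_real_conj hqCreal w, hG w]
  -- pC is real-valued
  have hpreal : ∀ w, conj (((p w : ℝ) : ℂ)) = ((p w : ℝ) : ℂ) := fun w => Complex.conj_ofReal _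
  -- ∂ of G at z
  have hwdG : wd G z = conj (wdb ψ₁ z) * wdb ψ₁ z + wd ψ₂ z * conj (wd ψ₂ z)
      - ((p z : ℝ) : ℂ)^2 * qC z := by
    have hwd_wdbψ₁ : wd (wdb ψ₁) z
        = wdb (fun w => ((p w : ℝ) : ℂ)) z * ψ₂ z + ((p z : ℝ):ℂ) * (-((p z : ℝ):ℂ) * ψ₁ z) := by
      rw [wd_wdb_comm hψ₁ z, hwdψ₁,
        wdb_mul (hpC.differentiable (by simp) z) (dψ₂ z), hD₂ z]
    have hwd_conjwdψ₂ : wd (fun w => conj (wd ψ₂ w)) z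
        = conj (-(1:ℂ) * (wd (fun w => ((p w : ℝ) : ℂ)) z * ψ₁ z
            + ((p z : ℝ):ℂ) * (((p z : ℝ):ℂ) * ψ₂ z))) := by
      rw [wd_conj, ← wd_wdb_comm hψ₂ z, hwdbψ₂]
      have e : (fun w => -((p w : ℝ) : ℂ) * ψ₁ w)
          = fun w => (-1 : ℂ) * (((p w : ℝ) : ℂ) * ψ₁ w) := by funext w; ring
      rw [e, wd_const_mul (f := fun w => ((p w : ℝ) : ℂ) * ψ₁ w) (-1) ((hpC.differentiable (by simp) z).mul (dψ₁ z)),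
        wd_mul (hpC.differentiable (by simp) z) (dψ₁ z), hD₁ z]
    have hwdpC : conj (wd (fun w => ((p w : ℝ) : ℂ)) z) = wdb (fun w => ((p w : ℝ) : ℂ)) z := by
      rw [wd_real_conj hpreal z, Complex.conj_conj]
    rw [hGdef]
    rw [wd_add (f := fun w => conj (ψ₁ w) * wdb ψ₁ w) (g := fun w => ψ₂ w * conj (wd ψ₂ w)) ((hcψ₁.differentiable (by simp) z).mul (hA.differentiable (by simp) z))
        ((dψ₂ z).mul ((contDiff_conj hB).differentiable (by simp) z)),
      wd_mul (hcψ₁.differentiable (by simp) z) (hA.differentiable (by simp) z),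
      wd_mul (dψ₂ z) ((contDiff_conj hB).differentiable (by simp) z),
      wd_conj, hwd_wdbψ₁, hwd_conjwdψ₂]
    simp only [map_mul, map_add, map_neg, map_one, Complex.conj_ofReal, Complex.conj_conj]
    rw [← hwdpC]
    rw [hqCdef]
    ring
  -- the log function
  set L : ℂ → ℂ := fun u => ((Real.log ((q u) ^ 2) : ℝ) : ℂ) with hLdef
  have key : ∀ w ∈ U, wdb L w = 2 * G w / qC w := by
    intro w hw
    rw [hLdef, wdb_log hqs (hqpos w hw)]
    rw [show (fun u => ((q u : ℝ) : ℂ)) = qC from funext hqC, hG w, hqC w]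
  have hqzU : q z ≠ 0 := hqpos z hz
  have hqCz : qC z ≠ 0 := by rw [← hqC z]; exact Complex.ofReal_ne_zero.mpr hqzU
  have hmem : ∀ᶠ w in nhds z, w ∈ U := hU.eventually_mem hz
  have hSdiff : DifferentiableAt ℝ (fun w => 2 * G w / qC w) z := by
    simp only [div_eq_mul_inv]
    exact ((contDiff_const.mul hGs).differentiable (by simp) z).mul
      ((hqCs.differentiable (by simp) z).inv hqCz)
  have hRS : wdb L =ᶠ[nhds z] fun w => 2 * G w / qC w := by
    filter_upwards [hmem] with w hw using key w hw
  have hRdiff : DifferentiableAt ℝ (wdb L) z := hSdiff.congr_of_eventuallyEq hRS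
  have hmulEq : (fun w => qC w * wdb L w) =ᶠ[nhds z] (fun w => 2 * G w) := by
    filter_upwards [hmem] with w hw
    have hne : qC w ≠ 0 := by
      rw [← hqC w]; exact Complex.ofReal_ne_zero.mpr (hqpos w hw)
    rw [key w hw]
    field_simp
  have e : wd qC z * wdb L z + qC z * wd (wdb L) z = 2 * wd G z := by
    rw [← wd_mul (hqCs.differentiable (by simp) z) hRdiff, wd_congr hmulEq,
      wd_const_mul 2 (hGs.differentiable (by simp) z)]
  have hfin : wd (wdb L) z = (2 * wd G z - wd qC z * wdb L z) / qC z := by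
    rw [eq_div_iff hqCz]
    linear_combination e
  -- now assemble
  show wd (wdb L) z = _
  rw [hfin, hwdG, hwdqC z, key z hz, hQdef z, wd_conj, hH z]
  rw [hGdef]
  push_cast [hH z]
  rw [hqC z, hqCdef]
  simp only [map_mul, map_add, map_sub, map_ofNat, Complex.conj_conj, Complex.conj_ofReal]
  have hqCz' : ψ₁ z * conj (ψ₁ z) + ψ₂ z * conj (ψ₂ z) ≠ 0 := hqCz
  field_simp
  ring
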